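/- arXiv:2510.09931 — 2 statements merged into one kernel-verified Lean document; each statement's English description precedes it below -/
import Mathlib

section
/- There are no integers d ≥ 2, N ≥ 2, k ≥ 1 satisfying 2·d^N = 3^k + 1. -/
/-!
Modulo 8, `d` is odd and `k = 2m` is even. If `2 ∣ N` or `3 ∣ N`, replacing `d` by a power of
itself gives a square or a cube, excluded modulo 3 and modulo 9. Otherwise `p = N ≥ 5` is odd and
prime to 3, and `s = 3^m` satisfies `s² + 1 = 2 d^p`.

In `ℤ[i]`, `s + i = (1 + i) z` with `z z̄ = d^p` and `z`, `z̄` coprime. Every unit is a `p`-th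
power, so `(-i)^j z` is one too (`p = 2j + 1`), which produces `B = U + V i` with `U² + V² = 2d`
and `B^p = 2^j (s + i)`. As `V ∣ Im (B^p) = 2^j` and `V` is odd, `V = ±1`, and then
`Re (B^p) ≡ ± p U` modulo `U²`. Hence `U ∣ s`, so `|U| = 3^r` with `r ≥ 1`; comparing sizes
gives `U² ∣ s`, whence `U ∣ p` and `3 ∣ p`.
-/

local notation "ℤ[i]" => GaussianInt

theorem IsCoprime.of_isCoprime_add_mul {R : Type*} [CommRing R] {x y a b : R}
    (h : IsCoprime (a * x + b * y) (x * y)) : IsCoprime x y := by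
  obtain ⟨u, v, huv⟩ := h
  exact ⟨u * a + v * y, u * b, by linear_combination huv⟩

theorem Int.odd_and_odd_of_sq_add_sq_eq_two_mul {a b n : ℤ} (h : a ^ 2 + b ^ 2 = 2 * n)
    (hn : Odd n) : Odd a ∧ Odd b := by
  have h2 : Even (a ^ 2 + b ^ 2) := ⟨n, by rw [h]; ring⟩
  have h4 : ¬ (4 : ℤ) ∣ a ^ 2 + b ^ 2 := by
    rw [h]; rintro ⟨c, hc⟩; obtain ⟨t, rfl⟩ := hn; omega
  rw [Int.even_add, Int.even_pow' two_ne_zero, Int.even_pow' two_ne_zero] at h2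
  by_contra hab
  rw [not_and_or, Int.not_odd_iff_even, Int.not_odd_iff_even, ← h2, or_self] at hab
  obtain ⟨x, rfl⟩ := hab
  obtain ⟨y, rfl⟩ := h2.1 ⟨x, rfl⟩
  exact h4 ⟨x ^ 2 + y ^ 2, by ring⟩

namespace Zsqrtd

variable {d : ℤ}

theorem norm_pow (a : ℤ√d) (n : ℕ) : (a ^ n).norm = a.norm ^ n :=
  map_pow normMonoidHom a n

theorem im_dvd_im_pow (a : ℤ√d) (n : ℕ) : a.im ∣ (a ^ n).im := by
  have h : (a.im : ℤ√d) ∣ a ^ n - (a.re : ℤ√d) ^ n :=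
    (Dvd.intro _ (by ext <;> simp : (a.im : ℤ√d) * sqrtd = a - (a.re : ℤ√d))).trans
      (sub_dvd_pow_sub_pow _ _ n)
  rw [intCast_dvd, im_sub, ← Int.cast_pow, im_intCast, sub_zero] at h
  exact h.2

theorem sq_re_dvd_re_pow_sub (a : ℤ√d) (j : ℕ) :
    a.re ^ 2 ∣ (a ^ (2 * j + 1)).re - (2 * j + 1) * (d * a.im ^ 2) ^ j * a.re := by
  set x : ℤ√d := ⟨0, a.im⟩
  have hsq : x ^ 2 = ((d * a.im ^ 2 : ℤ) : ℤ√d) := by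
    ext <;> simp [x, sq]; ring
  have hodd : (x ^ (2 * j + 1)).re = 0 := by
    rw [pow_succ, pow_mul, hsq, ← Int.cast_pow, re_mul, re_intCast, im_intCast]
    simp [x]
  have h := sq_dvd_add_pow_sub_sub (a.re : ℤ√d) x (2 * j + 1)
  rw [← Int.cast_pow, intCast_dvd, Nat.add_sub_cancel, pow_mul, hsq,
    show x + a.re = a by ext <;> simp [x], ← Int.cast_pow] at h
  convert h.1 using 1
  simp only [re_sub, re_mul, im_mul, re_intCast, im_intCast, re_natCast, im_natCast, hodd]
  push_cast
  ring

end Zsqrtd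

namespace GaussianInt

theorem pow_four_eq_one_of_isUnit {u : ℤ[i]} (hu : IsUnit u) : u ^ 4 = 1 := by
  have hnorm : u.re * u.re + u.im * u.im = 1 := by
    simpa [Zsqrtd.norm_def] using (Zsqrtd.norm_eq_one_iff' (by norm_num) u).2 hu
  have hreim : u.re * u.im = 0 := by
    nlinarith [sq_nonneg (u.re + u.im), sq_nonneg (u.re - u.im)]
  have hsq : u ^ 2 = ((u.re ^ 2 - u.im ^ 2 : ℤ) : ℤ[i]) := by
    ext
    · simp [sq]; ring
    · simp [sq]; linear_combination 2 * hreim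
  have hsq_sq : (u.re ^ 2 - u.im ^ 2) ^ 2 = 1 := by
    linear_combination (u.re * u.re + u.im * u.im + 1) * hnorm - 4 * (u.re * u.im) * hreim
  rw [show 4 = 2 * 2 from rfl, pow_mul, hsq, ← Int.cast_pow, hsq_sq, Int.cast_one]

theorem exists_pow_eq_of_isUnit {p : ℕ} (hp : Odd p) {u : ℤ[i]} (hu : IsUnit u) :
    ∃ v, v ^ p = u := by
  obtain ⟨j, rfl⟩ := hp
  refine ⟨u ^ (2 * j + 1), ?_⟩
  rw [← pow_mul, show (2 * j + 1) * (2 * j + 1) = 4 * (j * j + j) + 1 by ring, pow_succ,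
    pow_mul, pow_four_eq_one_of_isUnit hu, one_pow, one_mul]

theorem exists_pow_eq_unit_mul {p : ℕ} (hp : Odd p) {x y c u : ℤ[i]} (hxy : IsCoprime x y)
    (h : x * y = c ^ p) (hu : IsUnit u) : ∃ w, w ^ p = u * x := by
  obtain ⟨w, v, hv⟩ := exists_associated_pow_of_mul_eq_pow' hxy h
  obtain ⟨t, ht⟩ := exists_pow_eq_of_isUnit hp (hu.mul v.isUnit)
  exact ⟨t * w, by rw [mul_pow, ht, ← hv]; ring⟩

theorem exists_pow_eq_of_sq_add_one_eq {s n : ℤ} {j : ℕ} (hn : Odd n)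
    (h : s ^ 2 + 1 = 2 * n ^ (2 * j + 1)) :
    ∃ B : ℤ[i], B.norm = 2 * n ∧ B ^ (2 * j + 1) = ⟨2 ^ j * s, 2 ^ j⟩ := by
  obtain ⟨c, rfl⟩ : Odd s := (Int.odd_pow' two_ne_zero).1 ⟨n ^ (2 * j + 1) - 1, by linarith⟩
  set z : ℤ[i] := ⟨c + 1, -c⟩
  have hnorm : z.norm = n ^ (2 * j + 1) := by
    simp only [Zsqrtd.norm_def, z]; linarith
  have hzz : z * star z = (n : ℤ[i]) ^ (2 * j + 1) := by
    rw [← Zsqrtd.norm_eq_mul_conj, hnorm, Int.cast_pow]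
  have hcop : IsCoprime z (star z) := by
    have h2 := ((Int.isCoprime_two_left.2 hn).pow_right (n := 2 * j + 1)).map
      (Int.castRingHom ℤ[i])
    rw [map_ofNat, map_pow, eq_intCast, ← hzz,
      show (2 : ℤ[i]) = ⟨1, -1⟩ * z + ⟨1, 1⟩ * star z by ext <;> simp [z]; ring] at h2
    exact h2.of_isCoprime_add_mul
  -- `ν = -i` is the unit with `(1 + i)² ν = 2`.
  set ν : ℤ[i] := ⟨0, -1⟩
  have hν : ν.norm = 1 := by simp [ν, Zsqrtd.norm_def]
  obtain ⟨w, hw⟩ := exists_pow_eq_unit_mul (odd_two_mul_add_one j) hcop hzz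
    ((IsUnit.of_mul_eq_one ⟨0, 1⟩ (by ext <;> simp [ν])).pow j : IsUnit (ν ^ j))
  refine ⟨⟨1, 1⟩ * w, ?_, ?_⟩
  · have hnw : w.norm ^ (2 * j + 1) = n ^ (2 * j + 1) := by
      rw [← Zsqrtd.norm_pow, hw, Zsqrtd.norm_mul, Zsqrtd.norm_pow, hν, one_pow, one_mul, hnorm]
    rw [Zsqrtd.norm_mul, (Odd.pow_inj (odd_two_mul_add_one j)).1 hnw]
    simp [Zsqrtd.norm_def]
  · calc (⟨1, 1⟩ * w) ^ (2 * j + 1) = ⟨1, 1⟩ ^ (2 * j + 1) * (ν ^ j * z) := by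
          rw [mul_pow, hw]
      _ = ((⟨1, 1⟩ ^ 2 * ν) ^ j : ℤ[i]) * (⟨1, 1⟩ * z) := by ring
      _ = ((2 ^ j : ℤ) : ℤ[i]) * ⟨2 * c + 1, 1⟩ := by
          rw [show (⟨1, 1⟩ ^ 2 * ν : ℤ[i]) = 2 by ext <;> simp [ν, sq],
            show (⟨1, 1⟩ * z : ℤ[i]) = ⟨2 * c + 1, 1⟩ by ext <;> simp [z]; ring]
          push_cast
          rfl
      _ = ⟨2 ^ j * (2 * c + 1), 2 ^ j⟩ := by rw [Zsqrtd.smul_val, mul_one]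

theorem re_dvd_of_pow_eq {B : ℤ[i]} {s : ℤ} {j : ℕ} (hU : Odd B.re)
    (hV : B.im ^ 2 = 1) (hpow : B ^ (2 * j + 1) = ⟨2 ^ j * s, 2 ^ j⟩) :
    B.re ∣ s ∧ (B.re ^ 2 ∣ s → B.re ∣ 2 * j + 1) := by
  have key := B.sq_re_dvd_re_pow_sub j
  rw [hpow, hV, mul_one] at key
  refine ⟨(Int.isCoprime_two_right.2 hU).pow_right.dvd_of_dvd_mul_left <|
    (dvd_sub_left (dvd_mul_left _ _)).1 <| (dvd_pow_self _ two_ne_zero).trans key, fun hs => ?_⟩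
  rw [dvd_sub_right (hs.mul_left _), sq] at key
  have hpU := (mul_dvd_mul_iff_right (by rintro h0; simp [h0] at hU)).1 key
  rwa [((isUnit_neg_one).pow j).dvd_mul_right] at hpU

end GaussianInt

theorem three_pow_mod_eight (k : ℕ) : 3 ^ k % 8 = if Even k then 1 else 3 := by
  induction k with
  | zero => rfl
  | succ k ih =>
    rw [pow_succ, Nat.mul_mod, ih]
    by_cases hk : Even k <;> simp [hk, Nat.even_add_one]

section TwoMulPowEqThreePowAddOne

variable {d e N k : ℕ}

theorem odd_of_two_mul_pow_eq (hN : 2 ≤ N) (h : 2 * d ^ N = 3 ^ k + 1) : Odd d := by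
  by_contra hd
  obtain ⟨t, rfl⟩ := Nat.not_odd_iff_even.1 hd
  have h8 : 8 ∣ 2 * (t + t) ^ N := by
    obtain ⟨M, rfl⟩ := Nat.exists_eq_add_of_le' hN
    exact ⟨t ^ (M + 2) * 2 ^ M, by ring⟩
  have := three_pow_mod_eight k
  split_ifs at this <;> omega

theorem even_of_two_mul_pow_eq (hd : Odd d) (h : 2 * d ^ N = 3 ^ k + 1) : Even k := by
  obtain ⟨t, ht⟩ := hd.pow (n := N)
  have := three_pow_mod_eight k
  split_ifs at this with hk
  · exact hk
  · omega

theorem two_mul_sq_ne_three_pow_add_one (hk : 1 ≤ k) : 2 * e ^ 2 ≠ 3 ^ k + 1 := by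
  obtain ⟨k, rfl⟩ := Nat.exists_eq_add_of_le' hk
  intro h
  have h3 := congrArg (Nat.cast : ℕ → ZMod 3) h
  push_cast [pow_succ 3 k] at h3
  rw [show (3 : ZMod 3) = 0 from rfl, mul_zero, zero_add] at h3
  generalize (e : ZMod 3) = x at h3
  revert x
  decide

theorem two_mul_cube_ne_three_pow_add_one (hk : 2 ≤ k) : 2 * e ^ 3 ≠ 3 ^ k + 1 := by
  obtain ⟨k, rfl⟩ := Nat.exists_eq_add_of_le' hk
  intro h
  have h9 := congrArg (Nat.cast : ℕ → ZMod 9) h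
  push_cast [pow_add 3 k 2] at h9
  rw [show (9 : ZMod 9) = 0 from rfl, mul_zero, zero_add] at h9
  generalize (e : ZMod 9) = x at h9
  revert x
  decide

end TwoMulPowEqThreePowAddOne

theorem two_mul_pow_ne_three_pow_add_one {d p m : ℕ} (hd : 2 ≤ d) (hp : Odd p) (hp1 : p ≠ 1)
    (hp3 : ¬ 3 ∣ p) : 2 * d ^ p ≠ 3 ^ (2 * m) + 1 := by
  intro h
  have hdodd : Odd (d : ℤ) := by exact_mod_cast odd_of_two_mul_pow_eq (by grind) h
  obtain ⟨j, rfl⟩ := hp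
  have hZ : ((3 : ℤ) ^ m) ^ 2 + 1 = 2 * (d : ℤ) ^ (2 * j + 1) := by
    rw [← pow_mul, mul_comm]; exact_mod_cast h.symm
  obtain ⟨B, hnorm, hpow⟩ := GaussianInt.exists_pow_eq_of_sq_add_one_eq hdodd hZ
  have hUV : B.re ^ 2 + B.im ^ 2 = 2 * d := by rw [← hnorm, Zsqrtd.norm_def]; ring
  obtain ⟨hUodd, hVodd⟩ := Int.odd_and_odd_of_sq_add_sq_eq_two_mul hUV hdodd
  have hV : B.im ^ 2 = 1 := by
    have := B.im_dvd_im_pow (2 * j + 1)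
    rw [hpow, ← mul_one (2 ^ j)] at this
    exact Int.isUnit_sq <| isUnit_of_dvd_one <|
      (Int.isCoprime_two_right.2 hVodd).pow_right.dvd_of_dvd_mul_left this
  obtain ⟨hU, hUp⟩ := GaussianInt.re_dvd_of_pow_eq hUodd hV hpow
  obtain ⟨r, -, hr⟩ := (Nat.dvd_prime_pow Nat.prime_three).1 (Int.natAbs_dvd_natAbs.2 hU)
  have hUsq : B.re ^ 2 = 3 ^ (2 * r) := by
    rw [← Int.natAbs_sq, hr]; push_cast; ring
  have hr1 : r ≠ 0 := by
    rintro rfl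
    rw [mul_zero, pow_zero] at hUsq
    have : (d : ℤ) = 1 := by linarith
    omega
  have hrm : 2 * r ≤ m := by
    have hd3 : (d : ℤ) ^ 3 ≤ d ^ (2 * j + 1) := pow_le_pow_right₀ (by omega) (by omega)
    have : (3 : ℤ) ^ (2 * r) < 3 ^ m := by
      refine lt_of_pow_lt_pow_left₀ 2 (by positivity) ?_
      rw [← hUsq, show B.re ^ 2 = 2 * d - 1 by linarith]
      have hd1 : (0 : ℤ) < d - 1 := by omega
      nlinarith [mul_pos hd1 (by nlinarith : (0 : ℤ) < d ^ 2 - d + 1)]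
    exact ((pow_lt_pow_iff_right₀ (by norm_num)).1 this).le
  have h3U : (3 : ℤ) ∣ B.re := Int.natCast_dvd.2 (hr ▸ dvd_pow_self 3 hr1)
  exact hp3 (by exact_mod_cast h3U.trans (hUp (hUsq ▸ pow_dvd_pow 3 hrm)))

theorem stmt_1 : ¬ ∃ (d N k : ℕ), 2 ≤ d ∧ 2 ≤ N ∧ 1 ≤ k ∧
    2 * d ^ N = 3 ^ k + 1 := by
  rintro ⟨d, N, k, hd, hN, hk, h⟩
  obtain ⟨m, rfl⟩ := (even_of_two_mul_pow_eq (odd_of_two_mul_pow_eq hN h) h).two_dvd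
  by_cases h2 : 2 ∣ N
  · obtain ⟨t, rfl⟩ := h2
    rw [pow_mul'] at h
    exact two_mul_sq_ne_three_pow_add_one hk h
  by_cases h3 : 3 ∣ N
  · obtain ⟨t, rfl⟩ := h3
    rw [pow_mul'] at h
    exact two_mul_cube_ne_three_pow_add_one (by omega) h
  exact two_mul_pow_ne_three_pow_add_one hd (Nat.odd_iff.2 (by omega)) (by omega) h3 h
end

section
/- For integers d ≥ 2 and k ≥ 1: if 2·d^2 = 3^k - 1 then (d, k) = (2, 2) or (d, k) = (11, 5). -/
private def P : ℕ → ℕ × ℕ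
  | 0 => (1, 1)
  | n + 1 => (5 * (P n).1 + 4 * (P n).2, 6 * (P n).1 + 5 * (P n).2)

private def Q : ℕ → ℕ × ℕ
  | 0 => (1, 0)
  | n + 1 => (3 * (Q n).1 + 4 * (Q n).2, 2 * (Q n).1 + 3 * (Q n).2)


private lemma Pstep (m : ℕ) : (P (m + 1)).1 = 5 * (P m).1 + 4 * (P m).2 ∧
    (P (m + 1)).2 = 6 * (P m).1 + 5 * (P m).2 := ⟨rfl, rfl⟩

private lemma Pstep3 (m : ℕ) : (P (m + 3)).1 = 485 * (P m).1 + 396 * (P m).2 ∧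
    (P (m + 3)).2 = 594 * (P m).1 + 485 * (P m).2 := by
  show (P (m + 1 + 1 + 1)).1 = _ ∧ (P (m + 1 + 1 + 1)).2 = _
  simp only [P]
  constructor <;> ring

private lemma Qstep3 (m : ℕ) : (Q (m + 3)).1 = 99 * (Q m).1 + 140 * (Q m).2 ∧
    (Q (m + 3)).2 = 70 * (Q m).1 + 99 * (Q m).2 := by
  show (Q (m + 1 + 1 + 1)).1 = _ ∧ (Q (m + 1 + 1 + 1)).2 = _
  simp only [Q]
  constructor <;> ring

private lemma Pinv : ∀ n, 3 * (P n).1 ^ 2 = 2 * (P n).2 ^ 2 + 1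
  | 0 => by norm_num [P]
  | n + 1 => by
      have ih := Pinv n
      simp only [P]
      nlinarith [ih]

private lemma Qinv : ∀ n, (Q n).1 ^ 2 = 2 * (Q n).2 ^ 2 + 1
  | 0 => by norm_num [Q]
  | n + 1 => by
      have ih := Qinv n
      simp only [Q]
      nlinarith [ih]

private lemma Pge : ∀ n, 1 ≤ (P n).1 ∧ 1 ≤ (P n).2
  | 0 => by norm_num [P]
  | n + 1 => by have := Pge n; simp only [P]; omega

private lemma Pone {n : ℕ} (h : (P n).1 = 1) : n = 0 := by
  cases n with
  | zero => rfl
  | succ n => have := Pge n; simp only [P] at h; omega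

private lemma Qge : ∀ n, 1 ≤ (Q n).1
  | 0 => by norm_num [Q]
  | n + 1 => by have := Qge n; simp only [Q]; omega

private lemma Qge1 : ∀ n, 3 ≤ (Q (n + 1)).1 ∧ 2 ≤ (Q (n + 1)).2 := by
  intro n
  have := Qge n
  simp only [Q]
  omega

private lemma Qone {n : ℕ} (h : (Q n).1 = 1) : n = 0 := by
  cases n with
  | zero => rfl
  | succ n => have := Qge1 n; omega

private lemma Qthree {n : ℕ} (h : (Q n).1 = 3) : n = 1 := by
  match n with
  | 0 => simp [Q] at h
  | 1 => rfl
  | n + 2 =>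
      have h1 := Qge1 n
      have : 17 ≤ (Q (n + 2)).1 := by
        show 17 ≤ 3 * (Q (n+1)).1 + 4 * (Q (n+1)).2
        omega
      omega

private lemma Pmod3 (n : ℕ) :
    (n % 6 = 0 ∧ (P n).1 % 3 = 1 ∧ (P n).2 % 3 = 1) ∨
    (n % 6 = 1 ∧ (P n).1 % 3 = 0 ∧ (P n).2 % 3 = 2) ∨
    (n % 6 = 2 ∧ (P n).1 % 3 = 2 ∧ (P n).2 % 3 = 1) ∨
    (n % 6 = 3 ∧ (P n).1 % 3 = 2 ∧ (P n).2 % 3 = 2) ∨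
    (n % 6 = 4 ∧ (P n).1 % 3 = 0 ∧ (P n).2 % 3 = 1) ∨
    (n % 6 = 5 ∧ (P n).1 % 3 = 1 ∧ (P n).2 % 3 = 2) := by
  induction n with
  | zero => norm_num [P]
  | succ n ih =>
    have f1 : (P (n + 1)).1 = 5 * (P n).1 + 4 * (P n).2 := rfl
    have f2 : (P (n + 1)).2 = 6 * (P n).1 + 5 * (P n).2 := rfl
    rcases ih with ⟨hn,h1,h2⟩|⟨hn,h1,h2⟩|⟨hn,h1,h2⟩|⟨hn,h1,h2⟩|⟨hn,h1,h2⟩|⟨hn,h1,h2⟩ <;>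
      omega

private lemma Qmod9 (n : ℕ) :
    (n % 12 = 0 ∧ (Q n).1 % 9 = 1 ∧ (Q n).2 % 9 = 0) ∨
    (n % 12 = 1 ∧ (Q n).1 % 9 = 3 ∧ (Q n).2 % 9 = 2) ∨
    (n % 12 = 2 ∧ (Q n).1 % 9 = 8 ∧ (Q n).2 % 9 = 3) ∨
    (n % 12 = 3 ∧ (Q n).1 % 9 = 0 ∧ (Q n).2 % 9 = 7) ∨
    (n % 12 = 4 ∧ (Q n).1 % 9 = 1 ∧ (Q n).2 % 9 = 3) ∨
    (n % 12 = 5 ∧ (Q n).1 % 9 = 6 ∧ (Q n).2 % 9 = 2) ∨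
    (n % 12 = 6 ∧ (Q n).1 % 9 = 8 ∧ (Q n).2 % 9 = 0) ∨
    (n % 12 = 7 ∧ (Q n).1 % 9 = 6 ∧ (Q n).2 % 9 = 7) ∨
    (n % 12 = 8 ∧ (Q n).1 % 9 = 1 ∧ (Q n).2 % 9 = 6) ∨
    (n % 12 = 9 ∧ (Q n).1 % 9 = 0 ∧ (Q n).2 % 9 = 2) ∨
    (n % 12 = 10 ∧ (Q n).1 % 9 = 8 ∧ (Q n).2 % 9 = 6) ∨
    (n % 12 = 11 ∧ (Q n).1 % 9 = 3 ∧ (Q n).2 % 9 = 7) := by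
  induction n with
  | zero => norm_num [Q]
  | succ n ih =>
    have f1 : (Q (n + 1)).1 = 3 * (Q n).1 + 4 * (Q n).2 := rfl
    have f2 : (Q (n + 1)).2 = 2 * (Q n).1 + 3 * (Q n).2 := rfl
    rcases ih with ⟨hn,h1,h2⟩|⟨hn,h1,h2⟩|⟨hn,h1,h2⟩|⟨hn,h1,h2⟩|⟨hn,h1,h2⟩|⟨hn,h1,h2⟩|
      ⟨hn,h1,h2⟩|⟨hn,h1,h2⟩|⟨hn,h1,h2⟩|⟨hn,h1,h2⟩|⟨hn,h1,h2⟩|⟨hn,h1,h2⟩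
    · exact Or.inr (Or.inl ⟨by omega, by omega, by omega⟩)
    · exact Or.inr (Or.inr (Or.inl ⟨by omega, by omega, by omega⟩))
    · exact Or.inr (Or.inr (Or.inr (Or.inl ⟨by omega, by omega, by omega⟩)))
    · exact Or.inr (Or.inr (Or.inr (Or.inr (Or.inl ⟨by omega, by omega, by omega⟩))))
    · exact Or.inr (Or.inr (Or.inr (Or.inr (Or.inr (Or.inl ⟨by omega, by omega, by omega⟩)))))
    · exact Or.inr (Or.inr (Or.inr (Or.inr (Or.inr (Or.inr (Or.inl ⟨by omega, by omega, by omega⟩))))))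
    · exact Or.inr (Or.inr (Or.inr (Or.inr (Or.inr (Or.inr (Or.inr (Or.inl ⟨by omega, by omega, by omega⟩)))))))
    · exact Or.inr (Or.inr (Or.inr (Or.inr (Or.inr (Or.inr (Or.inr (Or.inr (Or.inl ⟨by omega, by omega, by omega⟩))))))))
    · exact Or.inr (Or.inr (Or.inr (Or.inr (Or.inr (Or.inr (Or.inr (Or.inr (Or.inr (Or.inl ⟨by omega, by omega, by omega⟩)))))))))
    · exact Or.inr (Or.inr (Or.inr (Or.inr (Or.inr (Or.inr (Or.inr (Or.inr (Or.inr (Or.inr (Or.inl ⟨by omega, by omega, by omega⟩))))))))))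
    · exact Or.inr (Or.inr (Or.inr (Or.inr (Or.inr (Or.inr (Or.inr (Or.inr (Or.inr (Or.inr (Or.inr (⟨by omega, by omega, by omega⟩)))))))))))
    · exact Or.inl ⟨by omega, by omega, by omega⟩

private lemma Ptri : ∀ n : ℕ,
    (P (3 * n + 1)).1 = 3 * (P n).1 ^ 3 + 6 * (P n).1 * (P n).2 ^ 2 ∧
    (P (3 * n + 1)).2 = 9 * (P n).1 ^ 2 * (P n).2 + 2 * (P n).2 ^ 3
  | 0 => by norm_num [P]
  | n + 1 => by
      obtain ⟨h1, h2⟩ := Ptri n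
      have e : 3 * (n + 1) + 1 = (3 * n + 1) + 3 := by ring
      obtain ⟨e1, e2⟩ := Pstep3 (3 * n + 1)
      obtain ⟨f1, f2⟩ := Pstep n
      rw [e, e1, e2, h1, h2, f1, f2]
      constructor <;> ring

private lemma Qtri : ∀ n : ℕ,
    (Q (3 * n)).1 = (Q n).1 ^ 3 + 6 * (Q n).1 * (Q n).2 ^ 2 ∧
    (Q (3 * n)).2 = 3 * (Q n).1 ^ 2 * (Q n).2 + 2 * (Q n).2 ^ 3
  | 0 => by norm_num [Q]
  | n + 1 => by
      obtain ⟨h1, h2⟩ := Qtri n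
      have e : 3 * (n + 1) = (3 * n) + 3 := by ring
      obtain ⟨e1, e2⟩ := Qstep3 (3 * n)
      have f1 : (Q (n + 1)).1 = 3 * (Q n).1 + 4 * (Q n).2 := rfl
      have f2 : (Q (n + 1)).2 = 2 * (Q n).1 + 3 * (Q n).2 := rfl
      rw [e, e1, e2, h1, h2, f1, f2]
      constructor <;> ring

private lemma descentOdd : ∀ D : ℕ, ∀ U : ℕ, 3 * U ^ 2 = 2 * D ^ 2 + 1 →
    ∃ n, (P n).1 = U ∧ (P n).2 = D := by
  intro D
  induction D using Nat.strong_induction_on with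
  | _ D ih =>
    intro U hU
    by_cases hD : D ≤ 3
    · have hU2 : U ≤ 2 := by nlinarith
      have hU3 := hU
      rw [pow_two, pow_two] at hU3
      interval_cases U <;> interval_cases D <;>
        first
          | omega
          | exact ⟨0, rfl, rfl⟩
    · push_neg at hD
      have h1 : 4 * D < 5 * U := by
        by_contra hc
        push_neg at hc
        nlinarith [Nat.mul_le_mul hc hc]
      have h2 : 6 * U < 5 * D := by
        by_contra hc
        push_neg at hc
        nlinarith [Nat.mul_le_mul hc hc]
      have hU' : 4 * D ≤ 5 * U := h1.le
      have hD' : 6 * U ≤ 5 * D := h2.le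
      have hsol : 3 * (5 * U - 4 * D) ^ 2 = 2 * (5 * D - 6 * U) ^ 2 + 1 := by
        zify [hU', hD']
        have hUz : (3 : ℤ) * (U : ℤ) ^ 2 = 2 * (D : ℤ) ^ 2 + 1 := by exact_mod_cast hU
        linear_combination hUz
      obtain ⟨n, hn1, hn2⟩ := ih (5 * D - 6 * U) (by omega) (5 * U - 4 * D) hsol
      exact ⟨n + 1, by simp only [P]; omega, by simp only [P]; omega⟩

private lemma descentEven : ∀ D : ℕ, ∀ x : ℕ, x ^ 2 = 2 * D ^ 2 + 1 →
    ∃ n, (Q n).1 = x ∧ (Q n).2 = D := by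
  intro D
  induction D using Nat.strong_induction_on with
  | _ D ih =>
    intro x hU
    by_cases hD : D ≤ 2
    · have hU2 : x ≤ 3 := by nlinarith
      have hU3 := hU
      rw [pow_two, pow_two] at hU3
      interval_cases x <;> interval_cases D <;>
        first
          | omega
          | exact ⟨0, rfl, rfl⟩
          | (refine ⟨1, ?_, ?_⟩ <;> norm_num [Q])
    · push_neg at hD
      have h1 : 4 * D < 3 * x := by
        by_contra hc
        push_neg at hc
        nlinarith [Nat.mul_le_mul hc hc]
      have h2 : 2 * x < 3 * D := by
        by_contra hc
        push_neg at hc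
        nlinarith [Nat.mul_le_mul hc hc]
      have hU' : 4 * D ≤ 3 * x := h1.le
      have hD' : 2 * x ≤ 3 * D := h2.le
      have hxD : D < x := by nlinarith
      have hsol : (3 * x - 4 * D) ^ 2 = 2 * (3 * D - 2 * x) ^ 2 + 1 := by
        zify [hU', hD']
        have hUz : (x : ℤ) ^ 2 = 2 * (D : ℤ) ^ 2 + 1 := by exact_mod_cast hU
        linear_combination hUz
      obtain ⟨n, hn1, hn2⟩ := ih (3 * D - 2 * x) (by omega) (3 * x - 4 * D) hsol
      exact ⟨n + 1, by simp only [Q]; omega, by simp only [Q]; omega⟩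

private lemma oddCase (m n : ℕ) (h : 3 ^ m = (P n).1) :
    (n = 0 ∧ m = 0) ∨ (n = 1 ∧ m = 2) := by
  rcases Nat.eq_zero_or_pos m with hm | hm
  · subst hm
    exact Or.inl ⟨Pone h.symm, rfl⟩
  · have h3 : (3 : ℕ) ∣ (P n).1 := h ▸ dvd_pow_self 3 hm.ne'
    have hmod := Pmod3 n
    have hn3 : n % 3 = 1 := by omega
    obtain ⟨n', rfl⟩ : ∃ n', n = 3 * n' + 1 := ⟨n / 3, by omega⟩
    have ha1 : 1 ≤ (P n').1 := (Pge n').1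
    obtain ⟨htu, -⟩ := Ptri n'
    have hinv := Pinv n'
    have ha2 : 1 ≤ (P n').1 ^ 2 := Nat.one_le_pow _ _ ha1
    obtain ⟨A, hA⟩ : ∃ A, A + 1 = 4 * (P n').1 ^ 2 := ⟨4 * (P n').1 ^ 2 - 1, by omega⟩
    have key : 3 ^ m = 3 * (P n').1 * A := by
      have e0 : 3 * (P n').1 * (A + 1) = 3 * (P n').1 * A + 3 * (P n').1 := by ring
      have e1 : 3 * (P n').1 * (A + 1) = 12 * (P n').1 ^ 3 := by rw [hA]; ring
      have e3 : 6 * (P n').1 * (P n').2 ^ 2 + 3 * (P n').1 = 9 * (P n').1 ^ 3 := by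
        calc 6 * (P n').1 * (P n').2 ^ 2 + 3 * (P n').1
            = 3 * (P n').1 * (2 * (P n').2 ^ 2 + 1) := by ring
          _ = 3 * (P n').1 * (3 * (P n').1 ^ 2) := by rw [← hinv]
          _ = 9 * (P n').1 ^ 3 := by ring
      have e2 : 3 ^ m + 3 * (P n').1 = 12 * (P n').1 ^ 3 := by
        rw [h, htu]; linarith
      linarith
    by_cases haj : (P n').1 = 1
    · have hn'0 : n' = 0 := Pone haj
      subst hn'0
      have h9 : (P (3 * 0 + 1)).1 = 9 := by norm_num [P]
      have : (3 : ℕ) ^ m = 3 ^ 2 := by rw [h, h9]; norm_num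
      have hm2 : m = 2 := Nat.pow_right_injective (by norm_num) this
      exact Or.inr ⟨rfl, hm2⟩
    · exfalso
      have hadvd : (P n').1 ∣ 3 ^ m := ⟨3 * A, by rw [key]; ring⟩
      obtain ⟨j, hj, haj'⟩ := (Nat.dvd_prime_pow Nat.prime_three).mp hadvd
      have hj1 : j ≠ 0 := by
        intro h0
        rw [h0, pow_zero] at haj'
        exact haj haj'
      have h3a : (3 : ℕ) ∣ (P n').1 := haj' ▸ dvd_pow_self 3 hj1
      obtain ⟨c, hc⟩ := h3a
      have hc2 : (P n').1 ^ 2 = 9 * c ^ 2 := by rw [hc]; ring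
      have hA3 : A % 3 = 2 := by omega
      have hAdvd : A ∣ 3 ^ m := ⟨3 * (P n').1, by rw [key]; ring⟩
      obtain ⟨s, hs, hAs⟩ := (Nat.dvd_prime_pow Nat.prime_three).mp hAdvd
      rcases Nat.eq_zero_or_pos s with hs0 | hs0
      · rw [hs0, pow_zero] at hAs
        omega
      · have : (3 : ℕ) ∣ A := hAs ▸ dvd_pow_self 3 hs0.ne'
        omega

private lemma evenCase (m n : ℕ) (h : 3 ^ m = (Q n).1) :
    (n = 0 ∧ m = 0) ∨ (n = 1 ∧ m = 1) := by
  match m with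
  | 0 => exact Or.inl ⟨Qone h.symm, rfl⟩
  | 1 => exact Or.inr ⟨Qthree h.symm, rfl⟩
  | m + 2 =>
    exfalso
    have h9 : (9 : ℕ) ∣ (Q n).1 := by
      rw [← h, pow_add]
      exact ⟨3 ^ m, by ring⟩
    have hmod := Qmod9 n
    have hn3 : n % 3 = 0 := by omega
    obtain ⟨n', rfl⟩ : ∃ n', n = 3 * n' := ⟨n / 3, by omega⟩
    have ha1 : 1 ≤ (Q n').1 := Qge n'
    obtain ⟨htu, -⟩ := Qtri n'
    have hinv := Qinv n'
    have ha2 : 1 ≤ (Q n').1 ^ 2 := Nat.one_le_pow _ _ ha1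
    obtain ⟨B, hB⟩ : ∃ B, B + 3 = 4 * (Q n').1 ^ 2 := ⟨4 * (Q n').1 ^ 2 - 3, by omega⟩
    have key : 3 ^ (m + 2) = (Q n').1 * B := by
      have e0 : (Q n').1 * (B + 3) = (Q n').1 * B + 3 * (Q n').1 := by ring
      have e1 : (Q n').1 * (B + 3) = 4 * (Q n').1 ^ 3 := by rw [hB]; ring
      have e3 : 6 * (Q n').1 * (Q n').2 ^ 2 + 3 * (Q n').1 = 3 * (Q n').1 ^ 3 := by
        calc 6 * (Q n').1 * (Q n').2 ^ 2 + 3 * (Q n').1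
            = 3 * (Q n').1 * (2 * (Q n').2 ^ 2 + 1) := by ring
          _ = 3 * (Q n').1 * ((Q n').1 ^ 2) := by rw [← hinv]
          _ = 3 * (Q n').1 ^ 3 := by ring
      have e2 : 3 ^ (m + 2) + 3 * (Q n').1 = 4 * (Q n').1 ^ 3 := by
        rw [h, htu]; linarith
      linarith
    by_cases haj : (Q n').1 = 1
    · rw [haj] at key hB
      have hB1 : B = 1 := by omega
      rw [hB1] at key
      have : (3:ℕ) ^ (m + 2) = 1 := by omega
      have := Nat.one_le_pow (m+2) 3 (by norm_num)
      have h9' := Nat.pow_le_pow_right (by norm_num : 1 ≤ 3) (show 2 ≤ m + 2 by omega)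
      simp at h9'
      omega
    · have hadvd : (Q n').1 ∣ 3 ^ (m + 2) := ⟨B, key⟩
      obtain ⟨j, hj, haj'⟩ := (Nat.dvd_prime_pow Nat.prime_three).mp hadvd
      have hj1 : j ≠ 0 := by
        intro h0
        rw [h0, pow_zero] at haj'
        exact haj haj'
      have h3a : (3 : ℕ) ∣ (Q n').1 := haj' ▸ dvd_pow_self 3 hj1
      obtain ⟨c, hc⟩ := h3a
      have hc2 : (Q n').1 ^ 2 = 9 * c ^ 2 := by rw [hc]; ring
      have hB9 : B % 9 = 6 := by omega
      have hBdvd : B ∣ 3 ^ (m + 2) := ⟨(Q n').1, by rw [key]; ring⟩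
      obtain ⟨s, hs, hBs⟩ := (Nat.dvd_prime_pow Nat.prime_three).mp hBdvd
      match s with
      | 0 => rw [pow_zero] at hBs; omega
      | 1 => rw [pow_one] at hBs; omega
      | s + 2 =>
        have : (9 : ℕ) ∣ B := by
          rw [hBs, pow_add]
          exact ⟨3 ^ s, by ring⟩
        omega

theorem stmt_19 (d k : ℕ) (hd : 2 ≤ d) (hk : 1 ≤ k)
    (h : 2 * d ^ 2 = 3 ^ k - 1) : (d = 2 ∧ k = 2) ∨ (d = 11 ∧ k = 5) := by
  have hk1 : 1 ≤ 3 ^ k := Nat.one_le_pow _ _ (by norm_num)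
  have h3 : 2 * d ^ 2 + 1 = 3 ^ k := by omega
  rcases Nat.even_or_odd k with he | ho
  · obtain ⟨m, hm⟩ := he
    have hx : (3 ^ m) ^ 2 = 2 * d ^ 2 + 1 := by
      rw [← pow_mul, show m * 2 = k from by omega]
      omega
    obtain ⟨n, hn1, hn2⟩ := descentEven d (3 ^ m) hx
    rcases evenCase m n hn1.symm with ⟨hn0, hm0⟩ | ⟨hn0, hm0⟩
    · omega
    · subst hn0
      have : (Q 1).2 = 2 := by norm_num [Q]
      left
      constructor <;> omega
  · obtain ⟨m, hm⟩ := ho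
    have hx : 3 * (3 ^ m) ^ 2 = 2 * d ^ 2 + 1 := by
      rw [← pow_mul]
      have : (3 : ℕ) * 3 ^ (m * 2) = 3 ^ k := by
        rw [show k = m * 2 + 1 from by omega, pow_succ]
        ring
      omega
    obtain ⟨n, hn1, hn2⟩ := descentOdd d (3 ^ m) hx
    rcases oddCase m n hn1.symm with ⟨hn0, hm0⟩ | ⟨hn0, hm0⟩
    · subst hn0
      have : (P 0).2 = 1 := rfl
      omega
    · subst hn0
      have : (P 1).2 = 11 := by norm_num [P]
      right
      constructor <;> omega
end
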